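/- arXiv:2512.19893 — 3 statements merged into one kernel-verified Lean document; each statement's English description precedes it below -/
import Mathlib

section
/- In the space of all linear isometries of a separable infinite-dimensional Hilbert space H equipped with the strong operator topology, if the surjective isometries (unitaries) are dense, then the surjective isometries form a residual (comeager) subset. -/
open Filter Topology

/-- In the space of linear isometries of a separable infinite-dimensional Hilbert space,
with the strong operator topology (the topology of pointwise convergence, realized as the
subspace topology of the product topology on `H → H`), if the surjective isometries are
dense then they form a residual subset. -/
theorem surjective_isometries_residual_of_dense
    {H : Type*} [NormedAddCommGroup H] [InnerProductSpace ℂ H] [CompleteSpace H]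
    [TopologicalSpace.SeparableSpace H]
    (hinf : ¬ FiniteDimensional ℂ H)
    (hdense : Dense {T : {g : H → H // ∃ L : H →ₗᵢ[ℂ] H, g = ⇑L} |
      Function.Surjective (T : H → H)}) :
    {T : {g : H → H // ∃ L : H →ₗᵢ[ℂ] H, g = ⇑L} | Function.Surjective (T : H → H)} ∈
      residual {g : H → H // ∃ L : H →ₗᵢ[ℂ] H, g = ⇑L} := by
  set X := {g : H → H // ∃ L : H →ₗᵢ[ℂ] H, g = ⇑L}
  set S : Set X := {T : X | Function.Surjective (T : H → H)}
  obtain ⟨D, hDc, hDd⟩ := TopologicalSpace.exists_countable_dense H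
  -- the open sets
  set U : D × ℕ → Set X := fun p => {T : X | ∃ y : H, dist ((T : H → H) y) p.1 < 1 / (p.2 + 1)}
  have hUopen : ∀ p, IsOpen (U p) := by
    intro p
    have : U p = ⋃ y : H, (fun T : X => (T : H → H) y) ⁻¹' Metric.ball (p.1 : H) (1 / (p.2 + 1)) := by
      ext T; simp [U, Metric.mem_ball]
    rw [this]
    exact isOpen_iUnion fun y =>
      (Metric.isOpen_ball).preimage ((continuous_apply y).comp continuous_subtype_val)
  have hSsub : ∀ p, S ⊆ U p := by
    rintro ⟨x, n⟩ T hT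
    obtain ⟨y, hy⟩ := hT (x : H)
    exact ⟨y, by simp [hy]; positivity⟩
  have hUdense : ∀ p, Dense (U p) := fun p => hdense.mono (hSsub p)
  have hCount : Countable (D × ℕ) := by
    have : Countable D := hDc.to_subtype
    infer_instance
  have hmem : (⋂ p, U p) ∈ residual X :=
    (countable_iInter_mem.mpr fun p => residual_of_dense_open (hUopen p) (hUdense p))
  refine mem_of_superset hmem ?_
  rintro T hT
  obtain ⟨L, hL⟩ := T.2
  -- range of L is closed
  have hclosed : IsClosed (Set.range L) := L.isometry.isClosedEmbedding.isClosed_range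
  -- range of L is dense: it contains D in its closure
  have hDsub : D ⊆ Set.range ⇑L := by
    intro x hx
    have hx' : x ∈ closure (Set.range ⇑L) := by
      rw [Metric.mem_closure_iff]
      intro ε hε
      obtain ⟨n, hn⟩ := exists_nat_one_div_lt hε
      have := Set.mem_iInter.1 hT (⟨⟨x, hx⟩, n⟩ : D × ℕ)
      obtain ⟨y, hy⟩ := this
      refine ⟨L y, Set.mem_range_self y, ?_⟩
      rw [dist_comm, ← hL]
      exact hy.trans hn
    rwa [hclosed.closure_eq] at hx'
  have hrange : Set.range ⇑L = Set.univ := by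
    have : Dense (Set.range ⇑L) := hDd.mono hDsub
    rw [← hclosed.closure_eq]
    exact this.closure_eq
  show Function.Surjective (T : H → H)
  rw [hL]
  exact Set.range_eq_univ.mp hrange
end

section
/- Let (a_{jk})_{j,k=1}^{N} be a matrix of nonnegative reals with all row sums and all column sums equal to 1/N, and let I_j = [(j−1)/N, j/N] ⊂ [0,1]. Then there exists an invertible (bijective up to null sets) Lebesgue-measure-preserving transformation T of [0,1] such that for all j, k: the Lebesgue measure of I_j ∩ T⁻¹(I_k) equals a_{jk}. -/
/-
Cut each block `[j/N, (j+1)/N)` into consecutive intervals of lengths `a j 0, …, a j (N-1)`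
(row-major tiling of `[0,1)`), and, using the column sums, each block `[k/N, (k+1)/N)` into
consecutive intervals of lengths `a 0 k, …, a (N-1) k` (column-major tiling). The interval exchange
translating the `(j,k)` interval of the first tiling onto the `(j,k)` interval of the second
preserves Lebesgue measure and is inverted by the reverse exchange. A point of block `j` lands in
block `k` exactly when it lies in the `(j,k)` interval, whose length is `a j k`.
-/

open MeasureTheory Filter Topology

/-- Lebesgue measure on `[0,1]`. -/
noncomputable abbrev μ01 : Measure ℝ := volume.restrict (Set.Icc (0 : ℝ) 1)

open Set Function

section Partitions

theorem Monotone.iUnion_fin_Ico_eq {X : Type*} [LinearOrder X] {f : ℕ → X} (hf : Monotone f)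
    (n : ℕ) : ⋃ i : Fin n, Ico (f i) (f (i + 1)) = Ico (f 0) (f n) := by
  refine Subset.antisymm
    (iUnion_subset fun i => Ico_subset_Ico (hf (Nat.zero_le _)) (hf i.isLt)) ?_
  refine (Ico_subset_biUnion_Ico n f).trans (iUnion₂_subset fun i hi => ?_)
  exact subset_iUnion_of_subset ⟨i, Finset.mem_range.1 hi⟩ subset_rfl

theorem Monotone.pairwise_disjoint_on_fin_Ico {X : Type*} [LinearOrder X] {f : ℕ → X}
    (hf : Monotone f) (n : ℕ) : Pairwise (Disjoint on fun i : Fin n => Ico (f i) (f (i + 1))) :=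
  hf.pairwise_disjoint_on_Ico_succ.comp_of_injective Fin.val_injective

theorem Pairwise.disjoint_on_prod_of_subset {α ι κ : Type*} {B : ι → Set α} {C : ι × κ → Set α}
    (hB : Pairwise (Disjoint on B)) (hC : ∀ j, Pairwise (Disjoint on fun k => C (j, k)))
    (hCB : ∀ p, C p ⊆ B p.1) : Pairwise (Disjoint on C) := by
  rintro ⟨j, k⟩ ⟨j', k'⟩ hne
  by_cases hj : j = j'
  · subst hj
    exact hC j fun hk => hne (hk ▸ rfl)
  · exact (hB hj).mono (hCB _) (hCB _)

theorem inter_preimage_inter_eq_of_iUnion_eq {α β ι κ : Type*} {U : Set α} {J : ι × κ → Set α}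
    {B : ι → Set α} {B' : κ → Set β} {T : α → β} (hU : ⋃ p, J p = U) (hJB : ∀ p, J p ⊆ B p.1)
    (hT : ∀ p, MapsTo T (J p) (B' p.2)) (hB : Pairwise (Disjoint on B))
    (hB' : Pairwise (Disjoint on B')) (j : ι) (k : κ) :
    B j ∩ T ⁻¹' B' k ∩ U = J (j, k) := by
  refine Subset.antisymm ?_ fun x hx => ⟨⟨hJB _ hx, hT _ hx⟩, hU ▸ mem_iUnion_of_mem _ hx⟩
  rintro x ⟨⟨hxj, hxk⟩, hxU⟩
  obtain ⟨⟨j', k'⟩, hx⟩ := mem_iUnion.1 (hU ▸ hxU)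
  obtain rfl : j' = j := by_contra fun hne => disjoint_left.1 (hB hne) (hJB _ hx) hxj
  obtain rfl : k' = k := by_contra fun hne => disjoint_left.1 (hB' hne) (hT _ hx) hxk
  exact hx

end Partitions

namespace MeasureTheory.MeasurePreserving

theorem restrict_iUnion {α β ι : Type*} [MeasurableSpace α] [MeasurableSpace β] [Countable ι]
    {μ : Measure α} {ν : Measure β} {f : α → β} {s : ι → Set α} {t : ι → Set β}
    (hf : Measurable f) (hs : Pairwise (Disjoint on s)) (hsm : ∀ i, MeasurableSet (s i))
    (ht : Pairwise (Disjoint on t)) (htm : ∀ i, MeasurableSet (t i))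
    (h : ∀ i, MeasurePreserving f (μ.restrict (s i)) (ν.restrict (t i))) :
    MeasurePreserving f (μ.restrict (⋃ i, s i)) (ν.restrict (⋃ i, t i)) := by
  refine ⟨hf, ?_⟩
  rw [Measure.restrict_iUnion hs hsm, Measure.restrict_iUnion ht htm,
    Measure.map_sum hf.aemeasurable]
  exact congrArg Measure.sum (funext fun i => (h i).map_eq)

end MeasureTheory.MeasurePreserving

section CutPoints

variable {n : ℕ} (x : ℝ) (b : Fin n → ℝ)

noncomputable def cutPoint (m : ℕ) : ℝ := x + ∑ l : Fin n with l.val < m, b l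

lemma cutPoint_zero : cutPoint x b 0 = x := by simp [cutPoint]

lemma cutPoint_self : cutPoint x b n = x + ∑ l, b l := by simp [cutPoint]

lemma cutPoint_succ (k : Fin n) : cutPoint x b (k + 1) = cutPoint x b k + b k := by
  have hfilter : Finset.univ.filter (fun l : Fin n => l.val < k + 1) =
      insert k (Finset.univ.filter fun l : Fin n => l.val < k) := by
    ext l
    simp only [Finset.mem_filter_univ, Finset.mem_insert, Fin.ext_iff]
    omega
  rw [cutPoint, cutPoint, hfilter, Finset.sum_insert (by simp), add_comm (b k), add_assoc]

variable {b}

lemma monotone_cutPoint (hb : ∀ l, 0 ≤ b l) : Monotone (cutPoint x b) := fun _ _ h =>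
  (add_le_add_iff_left x).2 <| Finset.sum_le_sum_of_subset_of_nonneg
    (Finset.monotone_filter_right _ fun _ _ hl => hl.trans_le h) fun l _ _ => hb l

end CutPoints

section Layout

variable {N : ℕ}

def block (N : ℕ) (j : Fin N) : Set ℝ := Ico ((j : ℝ) / N) (((j : ℝ) + 1) / N)

lemma pairwise_disjoint_block : Pairwise (Disjoint on block N) := by
  have h := (Nat.mono_cast.div_const (N.cast_nonneg : (0 : ℝ) ≤ N)).pairwise_disjoint_on_fin_Ico N
  simp only [Nat.cast_succ] at h
  exact h

lemma iUnion_block (hN : 0 < N) : ⋃ j, block N j = Ico 0 1 := by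
  have hN' : (N : ℝ) ≠ 0 := Nat.cast_ne_zero.2 hN.ne'
  simpa only [block, Nat.cast_succ, Nat.cast_zero, zero_div, div_self hN'] using
    (Nat.mono_cast.div_const (N.cast_nonneg : (0 : ℝ) ≤ N)).iUnion_fin_Ico_eq N

variable {a : Fin N → Fin N → ℝ}

noncomputable def rowStart (a : Fin N → Fin N → ℝ) (p : Fin N × Fin N) : ℝ :=
  cutPoint ((p.1 : ℝ) / N) (a p.1) p.2

noncomputable def colStart (a : Fin N → Fin N → ℝ) (p : Fin N × Fin N) : ℝ :=
  rowStart (swap a) p.swap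

lemma iUnion_Ico_rowStart_row (ha : ∀ j k, 0 ≤ a j k) (hrow : ∀ j, ∑ k, a j k = 1 / N)
    (j : Fin N) : ⋃ k, Ico (rowStart a (j, k)) (rowStart a (j, k) + a j k) = block N j := by
  simp only [rowStart, ← cutPoint_succ]
  rw [(monotone_cutPoint _ (ha j)).iUnion_fin_Ico_eq, cutPoint_zero, cutPoint_self, hrow, block,
    add_div]

lemma Ico_rowStart_subset_block (ha : ∀ j k, 0 ≤ a j k) (hrow : ∀ j, ∑ k, a j k = 1 / N)
    (p : Fin N × Fin N) : Ico (rowStart a p) (rowStart a p + uncurry a p) ⊆ block N p.1 :=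
  iUnion_Ico_rowStart_row ha hrow p.1 ▸
    subset_iUnion (fun k => Ico (rowStart a (p.1, k)) (rowStart a (p.1, k) + a p.1 k)) p.2

lemma pairwise_disjoint_Ico_rowStart (ha : ∀ j k, 0 ≤ a j k) (hrow : ∀ j, ∑ k, a j k = 1 / N) :
    Pairwise (Disjoint on fun p => Ico (rowStart a p) (rowStart a p + uncurry a p)) := by
  refine pairwise_disjoint_block.disjoint_on_prod_of_subset (fun j => ?_)
    (Ico_rowStart_subset_block ha hrow)
  simpa only [rowStart, uncurry_apply_pair, ← cutPoint_succ] using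
    (monotone_cutPoint _ (ha j)).pairwise_disjoint_on_fin_Ico N

lemma iUnion_Ico_rowStart (hN : 0 < N) (ha : ∀ j k, 0 ≤ a j k)
    (hrow : ∀ j, ∑ k, a j k = 1 / N) :
    ⋃ p, Ico (rowStart a p) (rowStart a p + uncurry a p) = Ico 0 1 := by
  rw [iUnion_prod']
  simp only [uncurry_apply_pair, iUnion_Ico_rowStart_row ha hrow]
  exact iUnion_block hN

lemma Ico_colStart_subset_block (ha : ∀ j k, 0 ≤ a j k) (hcol : ∀ k, ∑ j, a j k = 1 / N)
    (p : Fin N × Fin N) : Ico (colStart a p) (colStart a p + uncurry a p) ⊆ block N p.2 :=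
  Ico_rowStart_subset_block (a := swap a) (fun k j => ha j k) hcol p.swap

lemma pairwise_disjoint_Ico_colStart (ha : ∀ j k, 0 ≤ a j k) (hcol : ∀ k, ∑ j, a j k = 1 / N) :
    Pairwise (Disjoint on fun p => Ico (colStart a p) (colStart a p + uncurry a p)) :=
  fun _ _ hpq => pairwise_disjoint_Ico_rowStart (a := swap a) (fun k j => ha j k) hcol
    (Prod.swap_injective.ne hpq)

lemma iUnion_Ico_colStart (hN : 0 < N) (ha : ∀ j k, 0 ≤ a j k)
    (hcol : ∀ k, ∑ j, a j k = 1 / N) :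
    ⋃ p, Ico (colStart a p) (colStart a p + uncurry a p) = Ico 0 1 :=
  (Prod.swap_surjective.iUnion_comp _).trans
    (iUnion_Ico_rowStart (a := swap a) hN (fun k j => ha j k) hcol)

end Layout

section IntervalExchange

variable {ι : Type*} [Fintype ι] {c d ℓ : ι → ℝ}

noncomputable def intervalExchange (c d ℓ : ι → ℝ) (x : ℝ) : ℝ :=
  x + ∑ i, (Ico (c i) (c i + ℓ i)).indicator (fun _ => d i - c i) x

lemma measurable_intervalExchange : Measurable (intervalExchange c d ℓ) :=
  measurable_id.add <| Finset.measurable_sum _ fun _ _ =>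
    measurable_const.indicator measurableSet_Ico

lemma intervalExchange_of_mem (hc : Pairwise (Disjoint on fun i => Ico (c i) (c i + ℓ i)))
    {i : ι} {x : ℝ} (hx : x ∈ Ico (c i) (c i + ℓ i)) :
    intervalExchange c d ℓ x = x + (d i - c i) := by
  rw [intervalExchange, Finset.sum_eq_single i
      (fun j _ hji => indicator_of_notMem (fun hxj => disjoint_left.1 (hc hji) hxj hx) _)
      (absurd (Finset.mem_univ i)), indicator_of_mem hx]

lemma mapsTo_intervalExchange (hc : Pairwise (Disjoint on fun i => Ico (c i) (c i + ℓ i)))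
    (i : ι) : MapsTo (intervalExchange c d ℓ) (Ico (c i) (c i + ℓ i)) (Ico (d i) (d i + ℓ i)) := by
  intro x hx
  rw [intervalExchange_of_mem hc hx]
  exact ⟨by linarith [hx.1], by linarith [hx.2]⟩

lemma intervalExchange_intervalExchange
    (hc : Pairwise (Disjoint on fun i => Ico (c i) (c i + ℓ i)))
    (hd : Pairwise (Disjoint on fun i => Ico (d i) (d i + ℓ i)))
    {x : ℝ} (hx : x ∈ ⋃ i, Ico (c i) (c i + ℓ i)) :
    intervalExchange d c ℓ (intervalExchange c d ℓ x) = x := by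
  obtain ⟨i, hi⟩ := mem_iUnion.1 hx
  rw [intervalExchange_of_mem hd (mapsTo_intervalExchange hc i hi), intervalExchange_of_mem hc hi]
  ring

lemma measurePreserving_intervalExchange_restrict_Ico
    (hc : Pairwise (Disjoint on fun i => Ico (c i) (c i + ℓ i))) (i : ι) :
    MeasurePreserving (intervalExchange c d ℓ) (volume.restrict (Ico (c i) (c i + ℓ i)))
      (volume.restrict (Ico (d i) (d i + ℓ i))) := by
  have htrans := (measurePreserving_add_right volume (d i - c i)).restrict_preimage
    (measurableSet_Ico (a := d i) (b := d i + ℓ i))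
  rw [preimage_add_const_Ico, sub_sub_cancel, show d i + ℓ i - (d i - c i) = c i + ℓ i by ring]
    at htrans
  exact htrans.congr measurable_intervalExchange
    (ae_restrict_of_forall_mem measurableSet_Ico fun x hx => (intervalExchange_of_mem hc hx).symm)

lemma measurePreserving_intervalExchange
    (hc : Pairwise (Disjoint on fun i => Ico (c i) (c i + ℓ i)))
    (hd : Pairwise (Disjoint on fun i => Ico (d i) (d i + ℓ i))) :
    MeasurePreserving (intervalExchange c d ℓ) (volume.restrict (⋃ i, Ico (c i) (c i + ℓ i)))
      (volume.restrict (⋃ i, Ico (d i) (d i + ℓ i))) :=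
  MeasurePreserving.restrict_iUnion measurable_intervalExchange hc (fun _ => measurableSet_Ico) hd
    (fun _ => measurableSet_Ico) (measurePreserving_intervalExchange_restrict_Ico hc)

lemma μ01_eq_restrict_Ico : μ01 = volume.restrict (Ico 0 1) :=
  (Measure.restrict_congr_set Ico_ae_eq_Icc).symm

lemma measurePreserving_intervalExchange_μ01
    (hc : Pairwise (Disjoint on fun i => Ico (c i) (c i + ℓ i)))
    (hd : Pairwise (Disjoint on fun i => Ico (d i) (d i + ℓ i)))
    (hcU : ⋃ i, Ico (c i) (c i + ℓ i) = Ico 0 1) (hdU : ⋃ i, Ico (d i) (d i + ℓ i) = Ico 0 1) :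
    MeasurePreserving (intervalExchange c d ℓ) μ01 μ01 := by
  simpa only [hcU, hdU, ← μ01_eq_restrict_Ico] using measurePreserving_intervalExchange hc hd

lemma ae_intervalExchange_intervalExchange
    (hc : Pairwise (Disjoint on fun i => Ico (c i) (c i + ℓ i)))
    (hd : Pairwise (Disjoint on fun i => Ico (d i) (d i + ℓ i)))
    (hcU : ⋃ i, Ico (c i) (c i + ℓ i) = Ico 0 1) :
    ∀ᵐ x ∂μ01, intervalExchange d c ℓ (intervalExchange c d ℓ x) = x := by
  rw [μ01_eq_restrict_Ico]
  exact ae_restrict_of_forall_mem measurableSet_Ico fun _ hx =>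
    intervalExchange_intervalExchange hc hd (hcU ▸ hx)

end IntervalExchange

lemma μ01_Icc_inter_preimage_Icc {N : ℕ} {T : ℝ → ℝ} (hT : MeasurePreserving T μ01 μ01)
    (j k : Fin N) :
    μ01 (Icc ((j : ℝ) / N) (((j : ℝ) + 1) / N) ∩ T ⁻¹' Icc ((k : ℝ) / N) (((k : ℝ) + 1) / N)) =
      volume (block N j ∩ T ⁻¹' block N k ∩ Ico 0 1) := by
  have hIcc (i : Fin N) : Icc ((i : ℝ) / N) (((i : ℝ) + 1) / N) =ᵐ[μ01] block N i :=
    ae_restrict_of_ae Ico_ae_eq_Icc.symm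
  rw [measure_congr ((hIcc j).inter (hT.quasiMeasurePreserving.preimage_ae_eq (hIcc k))),
    μ01_eq_restrict_Ico, Measure.restrict_apply' measurableSet_Ico]

lemma block_inter_preimage_block_inter_Ico {N : ℕ} {a : Fin N → Fin N → ℝ} (hN : 0 < N)
    (ha : ∀ j k, 0 ≤ a j k) (hrow : ∀ j, ∑ k, a j k = 1 / N) (hcol : ∀ k, ∑ j, a j k = 1 / N) (j k : Fin N) :
    block N j ∩ intervalExchange (rowStart a) (colStart a) (uncurry a) ⁻¹' block N k ∩ Ico 0 1 =
      Ico (rowStart a (j, k)) (rowStart a (j, k) + a j k) :=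
  inter_preimage_inter_eq_of_iUnion_eq (iUnion_Ico_rowStart hN ha hrow)
    (Ico_rowStart_subset_block ha hrow)
    (fun p => (mapsTo_intervalExchange (pairwise_disjoint_Ico_rowStart ha hrow) p).mono_right
      (Ico_colStart_subset_block ha hcol p))
    pairwise_disjoint_block pairwise_disjoint_block j k

/-- Given a matrix of nonnegative reals with all row and column sums equal to `1/N`, there
is an invertible Lebesgue-measure-preserving transformation `T` of `[0,1]` with
`λ(I_j ∩ T⁻¹ I_k) = a j k` for the intervals `I_j = [j/N, (j+1)/N]`. -/
theorem exists_invertible_mpt_matching_matrix (N : ℕ) (hN : 0 < N)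
    (a : Fin N → Fin N → ℝ) (ha : ∀ j k, 0 ≤ a j k)
    (hrow : ∀ j, ∑ k, a j k = 1 / N) (hcol : ∀ k, ∑ j, a j k = 1 / N) :
    ∃ T S : ℝ → ℝ,
      MeasurePreserving T μ01 μ01 ∧ MeasurePreserving S μ01 μ01 ∧
      (∀ᵐ x ∂μ01, S (T x) = x) ∧ (∀ᵐ x ∂μ01, T (S x) = x) ∧
      ∀ j k : Fin N,
        μ01 (Set.Icc ((j : ℝ) / N) (((j : ℝ) + 1) / N) ∩
            T ⁻¹' Set.Icc ((k : ℝ) / N) (((k : ℝ) + 1) / N)) =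
          ENNReal.ofReal (a j k) := by
  have hc := pairwise_disjoint_Ico_rowStart ha hrow
  have hd := pairwise_disjoint_Ico_colStart ha hcol
  have hcU := iUnion_Ico_rowStart hN ha hrow
  have hdU := iUnion_Ico_colStart hN ha hcol
  have hT := measurePreserving_intervalExchange_μ01 hc hd hcU hdU
  refine ⟨_, _, hT, measurePreserving_intervalExchange_μ01 hd hc hdU hcU,
    ae_intervalExchange_intervalExchange hc hd hcU, ae_intervalExchange_intervalExchange hd hc hdU,
    fun j k => ?_⟩
  rw [μ01_Icc_inter_preimage_Icc hT, block_inter_preimage_block_inter_Ico hN ha hrow hcol,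
    Real.volume_Ico, add_sub_cancel_left]
end

section
/- Let (X, μ) be a standard non-atomic probability space. In the space 𝒯 of (Koopman operators of) all measure-preserving transformations of (X, μ), equipped with the strong operator topology, the subset 𝒯_inv of invertible measure-preserving transformations is dense. -/
/-!
Given a measure-preserving `T`, finitely many `f ∈ L²` and `ε > 0`, approximate each `f` by a
simple function `s f`. The joint level sets `A_v` of the `s f` and their preimages `T⁻¹ A_v` form
two finite partitions with matching measures. On a standard non-atomic space the distribution
function of a Borel embedding into `ℝ` carries any piece, injectively off a null set, onto an
interval of the same length with Lebesgue measure; so there is an invertible measure-preserving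
`S` mapping each `T⁻¹ A_v` onto `A_v` mod `0`. Then `s f ∘ S = s f ∘ T`, whence
`‖f ∘ S - f ∘ T‖ ≤ 2 ‖f - s f‖ < ε`.
-/

open MeasureTheory Filter Topology

variable (X : Type*) [MeasurableSpace X] (μ : Measure X)

/-- The set of Koopman operators of measure-preserving transformations of `(X, μ)`, as
self-maps of `L²(X, μ)`.  The ambient function space `L² → L²` carries the product topology,
whose subspace topology on this set is the strong operator topology. -/
def Koop : Set (Lp ℝ 2 μ → Lp ℝ 2 μ) :=
  {g | ∃ T : X → X, MeasurePreserving T μ μ ∧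
    ∀ f : Lp ℝ 2 μ, (g f : X → ℝ) =ᵐ[μ] (f : X → ℝ) ∘ T}

/-- The set of Koopman operators of invertible (i.e. admitting a measure-preserving a.e.
inverse) measure-preserving transformations of `(X, μ)`. -/
def KoopInv : Set (Lp ℝ 2 μ → Lp ℝ 2 μ) :=
  {g | ∃ T S : X → X, MeasurePreserving T μ μ ∧ MeasurePreserving S μ μ ∧
    (∀ᵐ x ∂μ, S (T x) = x) ∧ (∀ᵐ x ∂μ, T (S x) = x) ∧
    ∀ f : Lp ℝ 2 μ, (g f : X → ℝ) =ᵐ[μ] (f : X → ℝ) ∘ T}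

open Set Function
open scoped ENNReal

lemma subsingleton_of_forall_rat_notMem_Ioo {D : Set ℝ}
    (h : ∀ x ∈ D, ∀ y ∈ D, ∀ q : ℚ, (q : ℝ) ∉ Ioo x y) : D.Subsingleton := by
  intro x hx y hy
  by_contra hne
  rcases lt_or_gt_of_ne hne with hxy | hyx
  · obtain ⟨q, hq⟩ := exists_rat_btwn hxy
    exact h x hx y hy q hq
  · obtain ⟨q, hq⟩ := exists_rat_btwn hyx
    exact h y hy x hx q hq

namespace IsLowerSet

variable {ν : Measure ℝ} [NullSingletonClass ν] {G : Set ℝ}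

theorem measure_eq_iSup_rat (hG : IsLowerSet G) :
    ν G = ⨆ q : {q : ℚ // (q : ℝ) ∈ G}, ν (Iic (q : ℝ)) := by
  -- The union misses at most one point of `G`: its maximum, if that is irrational.
  have hsub : (⋃ q : {q : ℚ // (q : ℝ) ∈ G}, Iic (q : ℝ)) ⊆ G :=
    iUnion_subset fun q => hG.Iic_subset q.2
  have hdiff : (G \ ⋃ q : {q : ℚ // (q : ℝ) ∈ G}, Iic (q : ℝ)).Subsingleton :=
    subsingleton_of_forall_rat_notMem_Ioo fun x hx y hy q hq =>
      hx.2 (mem_iUnion.2 ⟨⟨q, hG hq.2.le hy.1⟩, hq.1.le⟩)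
  rw [← measure_eq_measure_of_null_sdiff hsub (hdiff.measure_zero ν)]
  exact Monotone.directed_le (fun a b hab => Iic_subset_Iic.2 (by exact_mod_cast hab))
    |>.measure_iUnion

theorem measure_eq_iInf_rat [IsFiniteMeasure ν] (hG : IsLowerSet G) (hq : ∃ q : ℚ, (q : ℝ) ∉ G) :
    ν G = ⨅ q : {q : ℚ // (q : ℝ) ∉ G}, ν (Iic (q : ℝ)) := by
  have hsub : G ⊆ ⋂ q : {q : ℚ // (q : ℝ) ∉ G}, Iic (q : ℝ) :=
    subset_iInter fun q x hx => le_of_not_gt fun hqx => q.2 (hG hqx.le hx)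
  have hdiff : ((⋂ q : {q : ℚ // (q : ℝ) ∉ G}, Iic (q : ℝ)) \ G).Subsingleton :=
    subsingleton_of_forall_rat_notMem_Ioo fun x hx y hy q hq =>
      (mem_iInter.1 hy.1 ⟨q, fun hqG => hx.2 (hG hq.1.le hqG)⟩).not_gt hq.2
  rw [measure_eq_measure_of_null_sdiff hsub (hdiff.measure_zero ν)]
  obtain ⟨q, hq⟩ := hq
  exact Monotone.directed_ge (fun a b hab => Iic_subset_Iic.2 (by exact_mod_cast hab))
    |>.measure_iInter (fun _ => measurableSet_Iic.nullMeasurableSet) ⟨⟨q, hq⟩, measure_ne_top _ _⟩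

end IsLowerSet

theorem Monotone.injOn_compl_iUnion_preimage_rat {β : Type*} [PartialOrder β] {F : ℝ → β}
    (hF : Monotone F) : InjOn F (⋃ q : ℚ, F ⁻¹' {F q})ᶜ := by
  intro a ha b hb hab
  by_contra hne
  wlog hlt : a < b generalizing a b
  · exact this hb ha hab.symm (Ne.symm hne) (lt_of_le_of_ne (not_lt.1 hlt) (Ne.symm hne))
  obtain ⟨q, haq, hqb⟩ := exists_rat_btwn hlt
  exact ha (mem_iUnion.2 ⟨q, le_antisymm (hF haq.le) (hab ▸ hF hqb.le)⟩)

noncomputable def distributionFunction (ν : Measure ℝ) (x : ℝ) : ℝ := (ν (Iic x)).toReal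

section distributionFunction

variable {ν : Measure ℝ} [IsFiniteMeasure ν]

theorem monotone_distributionFunction : Monotone (distributionFunction ν) := fun _ _ hab =>
  ENNReal.toReal_mono (measure_ne_top ν _) (measure_mono (Iic_subset_Iic.2 hab))

theorem ofReal_distributionFunction (x : ℝ) :
    ENNReal.ofReal (distributionFunction ν x) = ν (Iic x) :=
  ENNReal.ofReal_toReal (measure_ne_top ν _)

theorem distributionFunction_le_toReal_measure_univ (x : ℝ) :
    distributionFunction ν x ≤ (ν univ).toReal :=
  ENNReal.toReal_mono (measure_ne_top ν _) (measure_mono (subset_univ _))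

variable [NullSingletonClass ν]

theorem measure_distributionFunction_le {t : ℝ} (ht : t < (ν univ).toReal) :
    ν {x | distributionFunction ν x ≤ t} = ENNReal.ofReal t := by
  have hG : IsLowerSet {x | distributionFunction ν x ≤ t} := fun _ _ hba ha =>
    (monotone_distributionFunction hba).trans ha
  have hlim : Tendsto (distributionFunction ν) atTop (𝓝 (ν univ).toReal) :=
    (ENNReal.tendsto_toReal (measure_ne_top ν univ)).comp (tendsto_measure_Iic_atTop ν)
  obtain ⟨x, hx⟩ := (hlim.eventually (lt_mem_nhds ht)).exists
  obtain ⟨q₀, hxq₀⟩ := exists_rat_gt x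
  refine le_antisymm ?_ ?_
  · rw [hG.measure_eq_iSup_rat]
    exact iSup_le fun q => ofReal_distributionFunction (ν := ν) q ▸ ENNReal.ofReal_le_ofReal q.2
  · rw [hG.measure_eq_iInf_rat
      ⟨q₀, not_le.2 (hx.trans_le (monotone_distributionFunction hxq₀.le))⟩]
    exact le_iInf fun q =>
      ofReal_distributionFunction (ν := ν) q ▸ ENNReal.ofReal_le_ofReal (not_le.1 q.2).le

theorem map_distributionFunction :
    ν.map (distributionFunction ν) = volume.restrict (Ioc 0 (ν univ).toReal) := by
  refine Measure.ext_of_Iic _ _ fun t => ?_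
  rw [Measure.map_apply monotone_distributionFunction.measurable measurableSet_Iic,
    Measure.restrict_apply measurableSet_Iic]
  rcases lt_or_ge t (ν univ).toReal with ht | ht
  · rw [Iic_inter_Ioc_of_le ht.le, Real.volume_Ioc, sub_zero]
    exact measure_distributionFunction_le ht
  · rw [inter_eq_right.2 (Ioc_subset_Iic_self.trans (Iic_subset_Iic.2 ht)), Real.volume_Ioc,
      sub_zero, ENNReal.ofReal_toReal (measure_ne_top ν _)]
    exact congrArg ν <| eq_univ_of_forall fun x =>
      (distributionFunction_le_toReal_measure_univ x).trans ht

end distributionFunction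

def AEInjective {X Y : Type*} [MeasurableSpace X] (μ : Measure X) (Φ : X → Y) : Prop :=
  ∃ G ∈ ae μ, MeasurableSet G ∧ InjOn Φ G

theorem exists_aeInjective_map_eq_volume {Y : Type*} [MeasurableSpace Y] [StandardBorelSpace Y]
    (ν : Measure Y) [IsFiniteMeasure ν] [NullSingletonClass ν] :
    ∃ φ : Y → ℝ, Measurable φ ∧ AEInjective ν φ ∧
      ν.map φ = volume.restrict (Ioc 0 (ν univ).toReal) := by
  set e := embeddingReal Y
  have he : MeasurableEmbedding e := measurableEmbedding_embeddingReal Y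
  have : NullSingletonClass (ν.map e) := ⟨fun y => by
    rw [he.map_apply]
    exact ((subsingleton_singleton).preimage he.injective).measure_zero ν⟩
  set F := distributionFunction (ν.map e)
  have hF : Measurable F := monotone_distributionFunction.measurable
  have hmass : ν.map e univ = ν univ := by rw [he.map_apply, preimage_univ]
  -- `F` is injective off its plateaus, which are null because `F` pushes `ν.map e` to Lebesgue.
  set N := ⋃ q : ℚ, F ⁻¹' {F q}
  have hN : ν.map e N = 0 := measure_iUnion_null fun q => by
    rw [← Measure.map_apply hF (measurableSet_singleton _), map_distributionFunction]
    exact measure_singleton _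
  refine ⟨F ∘ e, hF.comp he.measurable, ⟨e ⁻¹' Nᶜ, ?_, ?_, ?_⟩, ?_⟩
  · rw [he.map_apply] at hN
    exact compl_mem_ae_iff.2 hN
  · exact he.measurable (MeasurableSet.iUnion fun q => hF (measurableSet_singleton _)).compl
  · exact monotone_distributionFunction.injOn_compl_iUnion_preimage_rat.comp he.injective.injOn
      (mapsTo_preimage e _)
  · rw [← Measure.map_map hF he.measurable, map_distributionFunction, hmass]

section Matching

variable {X Y : Type*} [MeasurableSpace X] [StandardBorelSpace X] [MeasurableSpace Y]
  [MeasurableSpace.CountablySeparated Y] {μ : Measure X} {Φ Ψ : X → Y}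

theorem exists_measurePreserving_comp_eq_of_map_eq (hΦ : Measurable Φ) (hΨ : Measurable Ψ)
    (hmap : μ.map Φ = μ.map Ψ) {G H : Set X} (hG : MeasurableSet G) (hGae : G ∈ ae μ)
    (hH : MeasurableSet H) (hHae : H ∈ ae μ) (hΨH : InjOn Ψ H) (himage : Φ '' G ⊆ Ψ '' H) :
    ∃ S : X → X, MeasurePreserving S μ μ ∧ ∀ x ∈ G, S x ∈ H ∧ Ψ (S x) = Φ x := by
  rcases isEmpty_or_nonempty X with hX | hX
  · exact ⟨id, MeasurePreserving.id μ, fun x => isEmptyElim x⟩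
  classical
  set S := G.piecewise (invFunOn Ψ H ∘ Φ) id
  have hSG : ∀ x ∈ G, S x ∈ H ∧ Ψ (S x) = Φ x := fun x hx => by
    have hex : ∃ y ∈ H, Ψ y = Φ x := himage (mem_image_of_mem Φ hx)
    simp only [S, piecewise_eq_of_mem _ _ _ hx, comp_apply]
    exact ⟨invFunOn_mem hex, invFunOn_eq hex⟩
  have hpre : ∀ Z, ∀ x ∈ G, S x ∈ Z ↔ Φ x ∈ Ψ '' (Z ∩ H) := fun Z x hx => by
    obtain ⟨hSH, hSΨ⟩ := hSG x hx
    refine ⟨fun hSZ => ⟨S x, ⟨hSZ, hSH⟩, hSΨ⟩, ?_⟩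
    rintro ⟨y, ⟨hyZ, hyH⟩, hy⟩
    rwa [hΨH hSH hyH (hSΨ.trans hy.symm)]
  have himageZ : ∀ Z, MeasurableSet Z → MeasurableSet (Ψ '' (Z ∩ H)) := fun Z hZ =>
    (hZ.inter hH).image_of_measurable_injOn hΨ (hΨH.mono inter_subset_right)
  have hS : Measurable S := fun Z hZ => by
    have : S ⁻¹' Z = G.ite (Φ ⁻¹' (Ψ '' (Z ∩ H))) Z := by
      ext x
      by_cases hx : x ∈ G
      · simpa [Set.ite, hx] using hpre Z x hx
      · simp [Set.ite, hx, S]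
    rw [this]
    exact hG.ite (hΦ (himageZ Z hZ)) hZ
  refine ⟨S, ⟨hS, Measure.ext fun Z hZ => ?_⟩, hSG⟩
  have hSZ : S ⁻¹' Z =ᵐ[μ] Φ ⁻¹' (Ψ '' (Z ∩ H)) := eventuallyEq_set.2 <| by
    filter_upwards [hGae] with x hx using hpre Z x hx
  have hΨZ : Ψ ⁻¹' (Ψ '' (Z ∩ H)) =ᵐ[μ] Z := eventuallyEq_set.2 <| by
    filter_upwards [hHae] with x hx
    exact ⟨fun ⟨y, ⟨hyZ, hyH⟩, hy⟩ => hΨH hyH hx hy ▸ hyZ, fun hxZ => ⟨x, ⟨hxZ, hx⟩, rfl⟩⟩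
  rw [Measure.map_apply hS hZ, measure_congr hSZ, ← Measure.map_apply hΦ (himageZ Z hZ), hmap,
    Measure.map_apply hΨ (himageZ Z hZ), measure_congr hΨZ]

theorem exists_invertible_measurePreserving_of_map_eq (hΦ : Measurable Φ) (hΨ : Measurable Ψ)
    (hΦinj : AEInjective μ Φ) (hΨinj : AEInjective μ Ψ) (hmap : μ.map Φ = μ.map Ψ) :
    ∃ S R : X → X, MeasurePreserving S μ μ ∧ MeasurePreserving R μ μ ∧
      (∀ᵐ x ∂μ, R (S x) = x) ∧ (∀ᵐ x ∂μ, S (R x) = x) ∧ Ψ ∘ S =ᵐ[μ] Φ := by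
  obtain ⟨G, hGae, hG, hΦG⟩ := hΦinj
  obtain ⟨H, hHae, hH, hΨH⟩ := hΨinj
  have hΦG' := hG.image_of_measurable_injOn hΦ hΦG
  have hΨH' := hH.image_of_measurable_injOn hΨ hΨH
  set G' := G ∩ Φ ⁻¹' (Ψ '' H)
  set H' := H ∩ Ψ ⁻¹' (Φ '' G)
  have hG'ae : G' ∈ ae μ := inter_mem hGae <| by
    rw [← mem_ae_map_iff hΦ.aemeasurable hΨH', hmap, mem_ae_map_iff hΨ.aemeasurable hΨH']
    exact mem_of_superset hHae (subset_preimage_image Ψ H)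
  have hH'ae : H' ∈ ae μ := inter_mem hHae <| by
    rw [← mem_ae_map_iff hΨ.aemeasurable hΦG', ← hmap, mem_ae_map_iff hΦ.aemeasurable hΦG']
    exact mem_of_superset hGae (subset_preimage_image Φ G)
  have himage : Φ '' G' = Ψ '' H' := by
    simp only [G', H', image_inter_preimage, inter_comm]
  obtain ⟨S, hS, hSG'⟩ := exists_measurePreserving_comp_eq_of_map_eq hΦ hΨ hmap
    (hG.inter (hΦ hΨH')) hG'ae (hH.inter (hΨ hΦG')) hH'ae (hΨH.mono inter_subset_left)
    himage.subset
  obtain ⟨R, hR, hRH'⟩ := exists_measurePreserving_comp_eq_of_map_eq hΨ hΦ hmap.symm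
    (hH.inter (hΨ hΦG')) hH'ae (hG.inter (hΦ hΨH')) hG'ae (hΦG.mono inter_subset_left)
    himage.symm.subset
  refine ⟨S, R, hS, hR, ?_, ?_, ?_⟩
  · filter_upwards [hG'ae] with x hx
    obtain ⟨hSx, hΨSx⟩ := hSG' x hx
    obtain ⟨hRSx, hΦRSx⟩ := hRH' (S x) hSx
    exact hΦG hRSx.1 hx.1 (hΦRSx.trans hΨSx)
  · filter_upwards [hH'ae] with x hx
    obtain ⟨hRx, hΦRx⟩ := hRH' x hx
    obtain ⟨hSRx, hΨSRx⟩ := hSG' (R x) hRx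
    exact hΨH hSRx.1 hx.1 (hΨSRx.trans hΦRx)
  · filter_upwards [hG'ae] with x hx using (hSG' x hx).2

end Matching

section Gluing

variable {X : Type*} [MeasurableSpace X] [StandardBorelSpace X] (μ : Measure X)
  [IsFiniteMeasure μ] [NullSingletonClass μ]
  {ι : Type*} [Countable ι] [MeasurableSpace ι] [MeasurableSingletonClass ι]

theorem exists_prod_aeInjective_map_eq_sum {P : X → ι} (hP : Measurable P) :
    ∃ Φ : X → ι × ℝ, Measurable Φ ∧ AEInjective μ Φ ∧ Prod.fst ∘ Φ = P ∧
      μ.map Φ = Measure.sum fun v => (Measure.dirac v).prod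
        (volume.restrict (Ioc 0 (μ.map P {v}).toReal)) := by
  choose φ hφ hφinj hφmap using fun v =>
    exists_aeInjective_map_eq_volume (μ.restrict (P ⁻¹' {v}))
  choose G hGae hG hφG using hφinj
  set Φ : X → ι × ℝ := fun x => (P x, φ (P x) x)
  have hΦ : Measurable Φ := hP.prodMk <|
    (measurable_from_prod_countable_left (f := fun p : X × ι => φ p.2 p.1) hφ).comp
      (measurable_id.prodMk hP)
  have hfiber : ∀ v, MeasurableSet (P ⁻¹' {v}) := fun v => hP (measurableSet_singleton v)
  refine ⟨Φ, hΦ, ⟨{x | x ∈ G (P x)}, ?_, ?_, ?_⟩, rfl, ?_⟩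
  · have hGv : ∀ v, ∀ᵐ x ∂μ, P x = v → x ∈ G (P x) := fun v => by
      filter_upwards [(ae_restrict_iff' (hfiber v)).1 (hGae v)] with x hx hxv
      exact hxv ▸ hx hxv
    filter_upwards [ae_all_iff.2 hGv] with x hx using hx (P x) rfl
  · have hGP : {x | x ∈ G (P x)} = ⋃ v, P ⁻¹' {v} ∩ G v := by ext x; simp
    rw [hGP]
    exact MeasurableSet.iUnion fun v => (hfiber v).inter (hG v)
  · intro x hx y hy hxy
    have hPxy : P x = P y := congrArg Prod.fst hxy
    exact hφG (P x) hx (hPxy ▸ hy) (by simpa [Φ, hPxy] using congrArg Prod.snd hxy)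
  · have hsum : μ = Measure.sum fun v => μ.restrict (P ⁻¹' {v}) := by
      rw [← Measure.restrict_iUnion (fun _ _ hvw => (disjoint_singleton.2 hvw).preimage P) hfiber,
        ← preimage_iUnion, iUnion_of_singleton, preimage_univ, Measure.restrict_univ]
    conv_lhs => rw [hsum]
    rw [Measure.map_sum hΦ.aemeasurable]
    congr 1
    ext1 v
    have hΦv : Φ =ᵐ[μ.restrict (P ⁻¹' {v})] Prod.mk v ∘ φ v := by
      filter_upwards [ae_restrict_mem (hfiber v)] with x hx
      simp only [mem_preimage, mem_singleton_iff] at hx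
      simp [Φ, hx]
    rw [Measure.map_congr hΦv, ← Measure.map_map measurable_prodMk_left (hφ v), hφmap v,
      Measure.dirac_prod, Measure.map_apply hP (measurableSet_singleton v),
      Measure.restrict_apply_univ]

theorem exists_invertible_measurePreserving_comp_ae_eq {P Q : X → ι} (hP : Measurable P)
    (hQ : Measurable Q) (hPQ : μ.map P = μ.map Q) :
    ∃ S R : X → X, MeasurePreserving S μ μ ∧ MeasurePreserving R μ μ ∧
      (∀ᵐ x ∂μ, R (S x) = x) ∧ (∀ᵐ x ∂μ, S (R x) = x) ∧ Q ∘ S =ᵐ[μ] P := by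
  obtain ⟨Φ, hΦ, hΦinj, hΦP, hΦmap⟩ := exists_prod_aeInjective_map_eq_sum μ hP
  obtain ⟨Ψ, hΨ, hΨinj, hΨQ, hΨmap⟩ := exists_prod_aeInjective_map_eq_sum μ hQ
  obtain ⟨S, R, hS, hR, hRS, hSR, hΨS⟩ :=
    exists_invertible_measurePreserving_of_map_eq hΦ hΨ hΦinj hΨinj (by rw [hΦmap, hΨmap, hPQ])
  refine ⟨S, R, hS, hR, hRS, hSR, ?_⟩
  rw [← hΦP, ← hΨQ]
  filter_upwards [hΨS] with x hx using congrArg Prod.fst hx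

end Gluing

namespace MeasureTheory.Lp

variable {X E : Type*} [MeasurableSpace X] [NormedAddCommGroup E] {p : ℝ≥0∞} {μ : Measure X}

theorem exists_simpleFunc_ae_eq_dist_lt [Fact (1 ≤ p)] (hp : p ≠ ∞) (f : Lp E p μ) {δ : ℝ}
    (hδ : 0 < δ) : ∃ (g : Lp E p μ) (s : SimpleFunc X E), ⇑g =ᵐ[μ] s ∧ dist f g < δ := by
  obtain ⟨g, hg, hfg⟩ := Metric.mem_closure_iff.1 (simpleFunc.dense hp f) δ hδ
  exact ⟨g, simpleFunc.toSimpleFunc ⟨g, hg⟩,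
    (simpleFunc.toSimpleFunc_eq_toFun ⟨g, hg⟩).symm, hfg⟩

theorem compMeasurePreserving_eq_of_comp_ae_eq {S T : X → X} (hS : MeasurePreserving S μ μ)
    (hT : MeasurePreserving T μ μ) {f : Lp E p μ} (h : f ∘ S =ᵐ[μ] f ∘ T) :
    compMeasurePreserving S hS f = compMeasurePreserving T hT f :=
  Lp.ext <| (coeFn_compMeasurePreserving f hS).trans <|
    h.trans (coeFn_compMeasurePreserving f hT).symm

end MeasureTheory.Lp

theorem exists_invertible_dist_compMeasurePreserving_lt {X : Type*} [MeasurableSpace X]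
    [StandardBorelSpace X] {μ : Measure X} [IsFiniteMeasure μ] [NullSingletonClass μ]
    {p : ℝ≥0∞} [Fact (1 ≤ p)] (hp : p ≠ ∞) {T : X → X} (hT : MeasurePreserving T μ μ)
    {I : Set (Lp ℝ p μ)} (hI : I.Finite) {ε : Lp ℝ p μ → ℝ} (hε : ∀ f ∈ I, 0 < ε f) :
    ∃ (S R : X → X) (hS : MeasurePreserving S μ μ), MeasurePreserving R μ μ ∧
      (∀ᵐ x ∂μ, R (S x) = x) ∧ (∀ᵐ x ∂μ, S (R x) = x) ∧
      ∀ f ∈ I,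
        dist (Lp.compMeasurePreserving S hS f) (Lp.compMeasurePreserving T hT f) < ε f := by
  have := hI.to_subtype
  choose g s hgs hfg using fun f : I => Lp.exists_simpleFunc_ae_eq_dist_lt hp (f : Lp ℝ p μ)
    (half_pos (hε f f.2))
  set Q : X → I → ℝ := fun x f => s f x
  have hQfin : (range Q).Finite :=
    (Set.Finite.pi fun f => (s f).finite_range).subset (range_subset_iff.2 fun x f _ => ⟨x, rfl⟩)
  have := hQfin.to_subtype
  have hQ : Measurable (rangeFactorization Q) :=
    (measurable_pi_lambda _ fun f => (s f).measurable).subtype_mk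
  obtain ⟨S, R, hS, hR, hRS, hSR, hQS⟩ := exists_invertible_measurePreserving_comp_ae_eq μ
    (hQ.comp hT.measurable) hQ (by rw [← Measure.map_map hQ hT.measurable, hT.map_eq])
  refine ⟨S, R, hS, hR, hRS, hSR, fun f hf => ?_⟩
  have hsST : s ⟨f, hf⟩ ∘ S =ᵐ[μ] s ⟨f, hf⟩ ∘ T := by
    filter_upwards [hQS] with x hx using congrArg (fun v : range Q => v.1 ⟨f, hf⟩) hx
  have hKg := Lp.compMeasurePreserving_eq_of_comp_ae_eq hS hT <|
    (hS.quasiMeasurePreserving.ae_eq_comp (hgs _)).trans <|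
      hsST.trans (hT.quasiMeasurePreserving.ae_eq_comp (hgs _)).symm
  calc dist (Lp.compMeasurePreserving S hS f) (Lp.compMeasurePreserving T hT f)
      ≤ dist (Lp.compMeasurePreserving S hS f) (Lp.compMeasurePreserving S hS (g ⟨f, hf⟩)) +
          dist (Lp.compMeasurePreserving T hT (g ⟨f, hf⟩)) (Lp.compMeasurePreserving T hT f) := by
        rw [← hKg]; exact dist_triangle _ _ _
    _ = dist f (g ⟨f, hf⟩) + dist (g ⟨f, hf⟩) f := by
        rw [(Lp.isometry_compMeasurePreserving hS).dist_eq,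
          (Lp.isometry_compMeasurePreserving hT).dist_eq]
    _ < ε f := by rw [dist_comm (g _)]; linarith [hfg ⟨f, hf⟩]

/-- On a standard non-atomic probability space, the invertible measure-preserving
transformations are dense (for the strong operator topology on Koopman operators) in the
set of all measure-preserving transformations. -/
theorem invertible_dense_in_mpt {X : Type*} [MeasurableSpace X] [StandardBorelSpace X]
    (μ : Measure X) [IsProbabilityMeasure μ] [NullSingletonClass μ] :
    Dense {g : (Koop X μ) | (g : Lp ℝ 2 μ → Lp ℝ 2 μ) ∈ KoopInv X μ} := by
  refine IsInducing.subtypeVal.dense_iff.2 fun ⟨g, T, hT, hgT⟩ => ?_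
  have hbasis := nhds_pi (a := g) ▸ hasBasis_pi fun f => Metric.nhds_basis_ball (x := g f)
  rw [mem_closure_iff_nhds_basis hbasis]
  rintro ⟨I, ε⟩ ⟨hI, hε⟩
  obtain ⟨S, R, hS, hR, hRS, hSR, hST⟩ :=
    exists_invertible_dist_compMeasurePreserving_lt ENNReal.ofNat_ne_top hT hI hε
  have hK : ∀ f : Lp ℝ 2 μ, (Lp.compMeasurePreserving S hS f : X → ℝ) =ᵐ[μ] f ∘ S :=
    fun f => Lp.coeFn_compMeasurePreserving f hS
  refine ⟨Lp.compMeasurePreserving S hS, ⟨⟨_, S, hS, hK⟩, ⟨S, R, hS, hR, hRS, hSR, hK⟩, rfl⟩,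
    fun f hf => ?_⟩
  have hgf : g f = Lp.compMeasurePreserving T hT f :=
    Lp.ext ((hgT f).trans (Lp.coeFn_compMeasurePreserving f hT).symm)
  simpa [hgf] using hST f hf
end
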